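/- arXiv:2103.01172 — 7 statements merged into one kernel-verified Lean document; each statement's English description precedes it below -/
import Mathlib

section
/- Let η¹, η² : ℝ → ℝ be continuous functions with limsup_{t→∞} ηⁱ(t) = -∞ for i = 1,2, and suppose η¹(u) - η¹(s) ≤ η²(u) - η²(s) for all s < u. For t ∈ ℝ let s_t^{i,L} and s_t^{i,R} denote the leftmost and rightmost maximizers of ηⁱ on [t,∞). Then s_t^{1,L} ≤ s_t^{2,L} and s_t^{1,R} ≤ s_t^{2,R}. -/
open Filter Set

/-- Monotonicity of leftmost and rightmost maximizers (Lemma A.1):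
if `η¹(u) - η¹(s) ≤ η²(u) - η²(s)` for all `s < u`, then the leftmost and rightmost
maximizers of `η¹` on `[t, ∞)` lie to the left of those of `η²`. -/
theorem maximizer_monotonicity
    (η₁ η₂ : ℝ → ℝ)
    (hc₁ : Continuous η₁) (hc₂ : Continuous η₂)
    (hlim₁ : Tendsto η₁ atTop atBot) (hlim₂ : Tendsto η₂ atTop atBot)
    (hcmp : ∀ s u : ℝ, s < u → η₁ u - η₁ s ≤ η₂ u - η₂ s)
    (t s₁L s₁R s₂L s₂R : ℝ)
    (h₁L : s₁L ∈ Ici t ∧ (∀ s ∈ Ici t, η₁ s ≤ η₁ s₁L) ∧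
      ∀ b ∈ Ici t, (∀ s ∈ Ici t, η₁ s ≤ η₁ b) → s₁L ≤ b)
    (h₂L : s₂L ∈ Ici t ∧ (∀ s ∈ Ici t, η₂ s ≤ η₂ s₂L) ∧
      ∀ b ∈ Ici t, (∀ s ∈ Ici t, η₂ s ≤ η₂ b) → s₂L ≤ b)
    (h₁R : s₁R ∈ Ici t ∧ (∀ s ∈ Ici t, η₁ s ≤ η₁ s₁R) ∧
      ∀ b ∈ Ici t, (∀ s ∈ Ici t, η₁ s ≤ η₁ b) → b ≤ s₁R)
    (h₂R : s₂R ∈ Ici t ∧ (∀ s ∈ Ici t, η₂ s ≤ η₂ s₂R) ∧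
      ∀ b ∈ Ici t, (∀ s ∈ Ici t, η₂ s ≤ η₂ b) → b ≤ s₂R) :
    s₁L ≤ s₂L ∧ s₁R ≤ s₂R := by
  obtain ⟨h1m, h1max, h1min⟩ := h₁L
  obtain ⟨h2m, h2max, h2min⟩ := h₂L
  obtain ⟨r1m, r1max, r1maxr⟩ := h₁R
  obtain ⟨r2m, r2max, r2maxr⟩ := h₂R
  constructor
  · by_contra h
    push_neg at h
    -- s₂L < s₁L
    have hη₂ : η₂ s₁L ≤ η₂ s₂L := h2max s₁L h1m
    have hcm := hcmp s₂L s₁L h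
    have hη₁ : η₁ s₁L ≤ η₁ s₂L := by linarith
    have : s₁L ≤ s₂L := h1min s₂L h2m (fun s hs => le_trans (h1max s hs) hη₁)
    linarith
  · by_contra h
    push_neg at h
    -- s₂R < s₁R
    have hη₁ : η₁ s₂R ≤ η₁ s₁R := r1max s₂R r2m
    have hcm := hcmp s₂R s₁R h
    have hη₂ : η₂ s₂R ≤ η₂ s₁R := by linarith
    have : s₁R ≤ s₂R := r2maxr s₁R r1m (fun s hs => le_trans (r2max s hs) hη₂)
    linarith
end

section
/- Let S_n (n ≥ 0) be subsets of a set S̃ ⊆ ℝⁿ on which f : S̃ → ℝ is continuous. Assume every x ∈ S₀ is the limit of a sequence (x_n) with x_n ∈ S_n for each n. Let c_n be a maximizer of f on S_n for each n ≥ 1, and assume c_n → c ∈ S₀. Then c is a maximizer of f on S₀. -/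
open Filter Set

/-- Lemma A.3: Kuratowski-type convergence of maximizers. If every point of `S 0` is the
limit of a sequence of points of `S n`, `c n` maximizes the continuous function `f` on
`S n` for each `n ≥ 1`, and `c n → L ∈ S 0`, then `L` maximizes `f` on `S 0`. -/
theorem set_limit_maximizer {d : ℕ} (Stilde : Set (Fin d → ℝ)) (S : ℕ → Set (Fin d → ℝ))
    (hsub : ∀ n, S n ⊆ Stilde)
    (f : (Fin d → ℝ) → ℝ) (hf : ContinuousOn f Stilde)
    (happrox : ∀ x ∈ S 0, ∃ y : ℕ → (Fin d → ℝ),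
      (∀ n, y n ∈ S n) ∧ Tendsto y atTop (nhds x))
    (c : ℕ → (Fin d → ℝ)) (hcS : ∀ n, 1 ≤ n → c n ∈ S n)
    (hmax : ∀ n, 1 ≤ n → ∀ x ∈ S n, f x ≤ f (c n))
    (L : Fin d → ℝ) (hL : L ∈ S 0) (hlim : Tendsto c atTop (nhds L)) :
    ∀ x ∈ S 0, f x ≤ f L := by
  intro x hx
  obtain ⟨y, hy, hyx⟩ := happrox x hx
  have hyx' : Tendsto (fun n => f (y n)) atTop (nhds (f x)) :=
    (hf x (hsub 0 hx)).tendsto.comp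
      (tendsto_nhdsWithin_of_tendsto_nhds_of_eventually_within y hyx
        (Eventually.of_forall fun n => hsub n (hy n)))
  have hcl : Tendsto (fun n => f (c n)) atTop (nhds (f L)) :=
    (hf L (hsub 0 hL)).tendsto.comp
      (tendsto_nhdsWithin_of_tendsto_nhds_of_eventually_within c hlim
        ((eventually_ge_atTop 1).mono fun n hn => hsub n (hcS n hn)))
  exact le_of_tendsto_of_tendsto hyx' hcl
    ((eventually_ge_atTop 1).mono fun n hn => hmax n hn (y n) (hy n))
end

section
/- Let f : ℝ → ℝ be continuous with f(t) → +∞ as t → +∞ and f(t) → -∞ as t → -∞, and set F(t) = sup_{s ≤ t} f(s). Then for every t ∈ ℝ, inf_{s ≥ t} (2F(s) - f(s)) = F(t). -/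
open Filter Set

/-! The lower bound `F t ≤ 2 F s - f s` for `s ≥ t` is just `f s ≤ F s` and `F t ≤ F s`. It is
attained at the first time `s₀ ≥ t` at which `f` climbs back to the level `F t`, which exists
because `f → +∞`: there `f s₀ = F t`, and since `f ≤ F t` on `[t, s₀]` also `F s₀ = F t`. -/

section RunningSup

variable {α β : Type*} [ConditionallyCompleteLinearOrder α] [ConditionallyCompleteLinearOrder β]
  {f : α → β}

theorem Continuous.bddAbove_image_Iic_of_tendsto_atBot [TopologicalSpace α] [OrderTopology α]
    [TopologicalSpace β] [OrderTopology β]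
    (hf : Continuous f) (hbot : Tendsto f atBot atBot) (t : α) : BddAbove (f '' Iic t) := by
  obtain ⟨b, hb⟩ := eventually_atBot.mp (hbot.eventually_le_atBot (f t))
  have hsplit : Iic t ⊆ Iic b ∪ Icc b t := fun s hs => (le_total s b).imp id (⟨·, hs⟩)
  refine BddAbove.mono (image_mono hsplit) ?_
  rw [image_union]
  exact .union ⟨f t, forall_mem_image.2 hb⟩ (isCompact_Icc.bddAbove_image hf.continuousOn)

theorem monotone_sSup_image_Iic (hbdd : ∀ t, BddAbove (f '' Iic t)) :
    Monotone fun t => sSup (f '' Iic t) := fun _ u htu =>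
  csSup_le_csSup (hbdd u) (nonempty_Iic.image f) (image_mono (Iic_subset_Iic.2 htu))

theorem sSup_image_Iic_le_of_forall_Icc_le {t u : α} (hbdd : BddAbove (f '' Iic t))
    (h : ∀ s ∈ Icc t u, f s ≤ sSup (f '' Iic t)) : sSup (f '' Iic u) ≤ sSup (f '' Iic t) := by
  refine csSup_le (nonempty_Iic.image f) (forall_mem_image.2 fun s hsu => ?_)
  rcases le_total s t with hst | hts
  · exact le_csSup hbdd (mem_image_of_mem f hst)
  · exact h s ⟨hts, hsu⟩

end RunningSup

theorem ContinuousOn.exists_first_hitting_time {α δ : Type*} [ConditionallyCompleteLinearOrder α]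
    [TopologicalSpace α] [OrderTopology α] [DenselyOrdered α] [LinearOrder δ] [TopologicalSpace δ]
    [OrderClosedTopology δ] {f : α → δ} {t : α} {c : δ} (hf : ContinuousOn f (Ici t))
    (hft : f t ≤ c) (hreach : ∃ u, t ≤ u ∧ c ≤ f u) :
    ∃ s₀, t ≤ s₀ ∧ f s₀ = c ∧ ∀ s ∈ Icc t s₀, f s ≤ c := by
  set S := Ici t ∩ f ⁻¹' Ici c
  have hS : IsClosed S := hf.preimage_isClosed_of_isClosed isClosed_Ici isClosed_Ici
  have hmem : sInf S ∈ S := hS.csInf_mem hreach ⟨t, fun _ hs => hs.1⟩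
  have hmin : ∀ s ∈ S, sInf S ≤ s := fun s hs => csInf_le ⟨t, fun _ hs => hs.1⟩ hs
  obtain ⟨r, hr, hfr⟩ := intermediate_value_Icc hmem.1 (hf.mono Icc_subset_Ici_self)
    ⟨hft, hmem.2⟩
  obtain rfl : r = sInf S := le_antisymm hr.2 (hmin r ⟨hr.1, hfr.ge⟩)
  refine ⟨sInf S, hmem.1, hfr, fun s hs => ?_⟩
  rcases hs.2.eq_or_lt with rfl | hlt
  · exact hfr.le
  · by_contra! hcs
    exact hlt.not_ge (hmin s ⟨hs.1, hcs.le⟩)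

/-- Lemma D.3 (Pitman-type identity): for continuous `f` with `f(t) → ±∞` as `t → ±∞`
and `F(t) = sup_{s ≤ t} f(s)`, one has `inf_{s ≥ t} (2F(s) - f(s)) = F(t)`. -/
theorem pitman_identity (f : ℝ → ℝ) (hf : Continuous f)
    (htop : Tendsto f atTop atTop) (hbot : Tendsto f atBot atBot)
    (F : ℝ → ℝ) (hF : ∀ t, F t = sSup (f '' Iic t)) :
    ∀ t : ℝ, sInf ((fun s => 2 * F s - f s) '' Ici t) = F t := by
  obtain rfl : F = fun t => sSup (f '' Iic t) := funext hF
  have hbdd := hf.bddAbove_image_Iic_of_tendsto_atBot hbot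
  have hmono := monotone_sSup_image_Iic hbdd
  have hfF : ∀ s, f s ≤ sSup (f '' Iic s) := fun s =>
    le_csSup (hbdd s) (mem_image_of_mem f self_mem_Iic)
  intro t
  obtain ⟨s₀, hts₀, hfs₀, hle⟩ := hf.continuousOn.exists_first_hitting_time (hfF t)
    ((eventually_ge_atTop t).and (htop.eventually_ge_atTop _)).exists
  have hFs₀ : sSup (f '' Iic s₀) = sSup (f '' Iic t) :=
    (sSup_image_Iic_le_of_forall_Icc_le (hbdd t) hle).antisymm (hmono hts₀)
  refine IsLeast.csInf_eq ⟨⟨s₀, hts₀, by simp only [hFs₀, hfs₀]; ring⟩, ?_⟩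
  rintro _ ⟨s, hts, rfl⟩
  linarith [hmono hts, hfF s]
end

section
/- Let B, Z : ℝ → ℝ be continuous functions with limsup_{s→∞}(B(s) - Z(s)) = -∞. Then the functions Q(Z,B)(t) = sup_{s ≥ t} {(B(s)-B(t)) - (Z(s)-Z(t))}, D(Z,B)(t) = Z(t) + Q(Z,B)(0) - Q(Z,B)(t), and R(Z,B)(t) = B(t) + Q(Z,B)(t) - Q(Z,B)(0) are continuous on ℝ. -/
open Filter Set

/-- Forward queueing map `Q(Z,B)(t) = sup_{s ≥ t} {B(t,s) - Z(t,s)}` where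
`f(t,s) := f(s) - f(t)`. -/
noncomputable def Qf (Z B : ℝ → ℝ) (t : ℝ) : ℝ :=
  sSup ((fun s => (B s - B t) - (Z s - Z t)) '' Ici t)

/-- Forward queueing map `D(Z,B)(t) = Z(t) + Q(Z,B)(0) - Q(Z,B)(t)`. -/
noncomputable def Df (Z B : ℝ → ℝ) (t : ℝ) : ℝ := Z t + Qf Z B 0 - Qf Z B t

/-- Forward queueing map `R(Z,B)(t) = B(t) + Q(Z,B)(t) - Q(Z,B)(0)`. -/
noncomputable def Rf (Z B : ℝ → ℝ) (t : ℝ) : ℝ := B t + Qf Z B t - Qf Z B 0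

/-!
With `X = B - Z` we have `Q(Z,B)(t) = M(t) - X(t)`, where `M(t) = sup_{s ≥ t} X(s)` is the running
forward maximum of `X`, so everything reduces to the continuity of `M`. Since `X → -∞`, for `t`
in a compact interval `[a, b]` the supremum is attained within a window `[t, t + L]` of uniform
length `L`; there `M(t) = sup_{u ∈ [0, L]} X(t + u)`, a supremum of a jointly continuous function
over a fixed compact set, hence continuous.
-/

section RunningMaximum

variable {X : ℝ → ℝ}

lemma sSup_image_Icc_mem_upperBounds_image_Ici {t T : ℝ} (hX : ContinuousOn X (Icc t T))
    (htT : t ≤ T) (hT : ∀ s, T ≤ s → X s ≤ X t) :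
    sSup (X '' Icc t T) ∈ upperBounds (X '' Ici t) := by
  have hbdd : BddAbove (X '' Icc t T) := isCompact_Icc.bddAbove_image hX
  rintro _ ⟨s, hs, rfl⟩
  rcases le_total s T with hsT | hTs
  · exact le_csSup hbdd ⟨s, ⟨hs, hsT⟩, rfl⟩
  · exact (hT s hTs).trans (le_csSup hbdd ⟨t, ⟨le_rfl, htT⟩, rfl⟩)

lemma sSup_image_Ici_eq_sSup_image_Icc {t T : ℝ} (hX : ContinuousOn X (Icc t T))
    (htT : t ≤ T) (hT : ∀ s, T ≤ s → X s ≤ X t) :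
    sSup (X '' Ici t) = sSup (X '' Icc t T) := by
  have hub := sSup_image_Icc_mem_upperBounds_image_Ici hX htT hT
  refine le_antisymm (csSup_le ⟨X t, mem_image_of_mem _ self_mem_Ici⟩ hub) ?_
  exact csSup_le_csSup ⟨_, hub⟩ ⟨X t, mem_image_of_mem _ ⟨le_rfl, htT⟩⟩
    (image_mono Icc_subset_Ici_self)

lemma exists_uniform_window_of_tendsto_atBot (hX : Continuous X)
    (hlim : Tendsto X atTop atBot) (a b : ℝ) :
    ∃ L, 0 ≤ L ∧ ∀ t ∈ Icc a b, ∀ s, t + L ≤ s → X s ≤ X t := by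
  obtain ⟨c, hc⟩ := (isCompact_Icc (a := a) (b := b)).bddBelow_image hX.continuousOn
  obtain ⟨T, hT⟩ := eventually_atTop.mp (tendsto_atBot.mp hlim c)
  refine ⟨max (T - a) 0, le_max_right _ _, fun t ht s hs => ?_⟩
  have hTs : T ≤ s := by linarith [le_max_left (T - a) 0, ht.1]
  exact (hT s hTs).trans (hc (mem_image_of_mem X ht))

lemma bddAbove_image_Ici_of_tendsto_atBot (hX : Continuous X)
    (hlim : Tendsto X atTop atBot) (t : ℝ) : BddAbove (X '' Ici t) := by
  obtain ⟨L, hL, hwindow⟩ := exists_uniform_window_of_tendsto_atBot hX hlim t t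
  exact ⟨_, sSup_image_Icc_mem_upperBounds_image_Ici hX.continuousOn
    (le_add_of_nonneg_right hL) (hwindow t ⟨le_rfl, le_rfl⟩)⟩

theorem continuous_sSup_image_Ici_of_tendsto_atBot (hX : Continuous X)
    (hlim : Tendsto X atTop atBot) : Continuous fun t => sSup (X '' Ici t) := by
  refine continuous_iff_continuousAt.mpr fun t₀ => ?_
  obtain ⟨L, hL, hwindow⟩ := exists_uniform_window_of_tendsto_atBot hX hlim (t₀ - 1) (t₀ + 1)
  have hshift : Continuous fun t => sSup ((fun u => X (t + u)) '' Icc 0 L) :=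
    isCompact_Icc.continuous_sSup (hX.comp continuous_add)
  refine hshift.continuousAt.congr ?_
  filter_upwards [Icc_mem_nhds (sub_one_lt t₀) (lt_add_one t₀)] with t ht
  have hIcc : Icc t (t + L) = (t + ·) '' Icc 0 L := by rw [image_const_add_Icc, add_zero]
  rw [sSup_image_Ici_eq_sSup_image_Icc hX.continuousOn (le_add_of_nonneg_right hL)
    (hwindow t ht), hIcc, image_image]

end RunningMaximum

lemma Qf_eq_sSup_image_Ici_sub {Z B : ℝ → ℝ} {t : ℝ}
    (hbdd : BddAbove ((fun s => B s - Z s) '' Ici t)) :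
    Qf Z B t = sSup ((fun s => B s - Z s) '' Ici t) - (B t - Z t) := by
  have himage : (fun s => (B s - B t) - (Z s - Z t)) '' Ici t
      = (fun y => y - (B t - Z t)) '' ((fun s => B s - Z s) '' Ici t) := by
    rw [image_image]
    exact image_congr fun s _ => by ring
  rw [Qf, himage]
  exact ((OrderIso.subRight (B t - Z t)).map_csSup' ⟨_, mem_image_of_mem _ self_mem_Ici⟩ hbdd).symm

/-- Lemma 2.4: continuity of the queueing maps `Q`, `D`, `R`. -/
theorem queueing_maps_continuous (Z B : ℝ → ℝ)
    (hZ : Continuous Z) (hB : Continuous B)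
    (hlim : Tendsto (fun s => B s - Z s) atTop atBot) :
    Continuous (Qf Z B) ∧ Continuous (Df Z B) ∧ Continuous (Rf Z B) := by
  have hX : Continuous fun s => B s - Z s := hB.sub hZ
  have hQ : Continuous (Qf Z B) := by
    have hQeq : Qf Z B = fun t => sSup ((fun s => B s - Z s) '' Ici t) - (B t - Z t) :=
      funext fun t => Qf_eq_sSup_image_Ici_sub (bddAbove_image_Ici_of_tendsto_atBot hX hlim t)
    rw [hQeq]
    exact (continuous_sSup_image_Ici_of_tendsto_atBot hX hlim).sub hX
  exact ⟨hQ, (hZ.add continuous_const).sub hQ, (hB.add hQ).sub continuous_const⟩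
end

section
/- Let Z, B : ℝ → ℝ be continuous with Z(0) = B(0) = 0 and B(t) - Z(t) → ∓∞ as t → ±∞. Write f̃(t) := -f(-t). Then for all t ∈ ℝ: Q(Z,B)(-t) = Q⃖(Z̃,B̃)(t), -D(Z,B)(-t) = D⃖(Z̃,B̃)(t), and -R(Z,B)(-t) = R⃖(Z̃,B̃)(t). -/
open Filter Set

/-- Backward queueing map `Q⃖(Y,C)(t) = sup_{s ≤ t} {C(s,t) - Y(s,t)}`. -/
noncomputable def Qb (Y C : ℝ → ℝ) (t : ℝ) : ℝ :=
  sSup ((fun s => (C t - C s) - (Y t - Y s)) '' Iic t)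

/-- Backward queueing map `D⃖`. -/
noncomputable def Db (Y C : ℝ → ℝ) (t : ℝ) : ℝ := Y t + Qb Y C t - Qb Y C 0

/-- Backward queueing map `R⃖`. -/
noncomputable def Rb (Y C : ℝ → ℝ) (t : ℝ) : ℝ := C t + Qb Y C 0 - Qb Y C t

/-- The time reversal `f̃(t) = -f(-t)`. -/
def tilde (f : ℝ → ℝ) : ℝ → ℝ := fun t => -f (-t)

/-- Lemma D.2: time reversal identities relating the forward and backward queueing maps. -/
theorem time_reversal_queueing_maps (Z B : ℝ → ℝ)
    (hZ : Continuous Z) (hB : Continuous B)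
    (hZ0 : Z 0 = 0) (hB0 : B 0 = 0)
    (htop : Tendsto (fun t => B t - Z t) atTop atBot)
    (hbot : Tendsto (fun t => B t - Z t) atBot atTop) :
    ∀ t : ℝ,
      Qf Z B (-t) = Qb (tilde Z) (tilde B) t ∧
      -(Df Z B (-t)) = Db (tilde Z) (tilde B) t ∧
      -(Rf Z B (-t)) = Rb (tilde Z) (tilde B) t := by
  have hQ : ∀ t : ℝ, Qf Z B (-t) = Qb (tilde Z) (tilde B) t := by
    intro t
    unfold Qf Qb tilde
    congr 1
    ext a
    constructor
    · rintro ⟨s, hs, rfl⟩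
      rw [mem_Ici] at hs
      refine ⟨-s, by simp only [mem_Iic]; linarith, ?_⟩
      ring
    · rintro ⟨s, hs, rfl⟩
      rw [mem_Iic] at hs
      refine ⟨-s, by simp only [mem_Ici]; linarith, ?_⟩
      ring
  intro t
  have h0 : Qf Z B 0 = Qb (tilde Z) (tilde B) 0 := by simpa using hQ 0
  refine ⟨hQ t, ?_, ?_⟩
  · unfold Df Db
    rw [hQ t, h0]
    simp only [tilde]
    ring
  · unfold Rf Rb
    rw [hQ t, h0]
    simp only [tilde]
    ring
end

section
/- Let Z, B, Y, C : ℝ → ℝ be continuous with Z(0)=B(0)=Y(0)=C(0)=0 and limits B(t)-Z(t) → ∓∞, C(t)-Y(t) → ∓∞ as t → ±∞. Suppose Y = D(Z,B), C = R(Z,B), Z = D⃖(Y,C), and B = R⃖(Y,C). Then Q(Z,B)(t) = Q⃖(Y,C)(t) for all t ∈ ℝ. -/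
open Filter Set

/-- A continuous function tending to `-∞` at `+∞` attains a maximum on `[a, ∞)`. -/
lemma exists_max_ge (X : ℝ → ℝ) (hc : Continuous X) (h : Tendsto X atTop atBot) (a : ℝ) :
    ∃ t, a ≤ t ∧ ∀ s, a ≤ s → X s ≤ X t := by
  obtain ⟨T, hT⟩ := (h.eventually (eventually_le_atBot (X a))).exists_forall_of_atTop
  set T' := max a T with hT'
  obtain ⟨t, ht, hmax⟩ := (isCompact_Icc (a := a) (b := T')).exists_isMaxOn
    ⟨a, le_refl a, le_max_left a T⟩ hc.continuousOn
  refine ⟨t, ht.1, fun s hs => ?_⟩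
  by_cases hsT : s ≤ T'
  · exact hmax ⟨hs, hsT⟩
  · exact le_trans (hT s (le_trans (le_max_right a T) (le_of_not_ge hsT)))
      (hmax ⟨le_refl a, le_max_left a T⟩)

/-- A continuous function tending to `+∞` at `-∞` attains a minimum on `(-∞, a]`. -/
lemma exists_min_le (W : ℝ → ℝ) (hc : Continuous W) (h : Tendsto W atBot atTop) (a : ℝ) :
    ∃ t, t ≤ a ∧ ∀ s, s ≤ a → W t ≤ W s := by
  have h' : Tendsto (fun u => -W (-u)) atTop atBot :=
    tendsto_neg_atTop_atBot.comp (h.comp tendsto_neg_atTop_atBot)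
  obtain ⟨t, ht, hmax⟩ := exists_max_ge (fun u => -W (-u))
    ((hc.comp continuous_neg).neg) h' (-a)
  refine ⟨-t, by linarith, fun s hs => ?_⟩
  have := hmax (-s) (by linarith)
  simpa using this

/-- Theorem D.1 (final claim): under the inversion relations, the forward and backward
queue length processes coincide: `Q(Z,B) = Q⃖(Y,C)`. -/
theorem queue_lengths_agree (Z B Y C : ℝ → ℝ)
    (hZc : Continuous Z) (hBc : Continuous B) (hYc : Continuous Y) (hCc : Continuous C)
    (hZ0 : Z 0 = 0) (hB0 : B 0 = 0) (hY0 : Y 0 = 0) (hC0 : C 0 = 0)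
    (hBZtop : Tendsto (fun t => B t - Z t) atTop atBot)
    (hBZbot : Tendsto (fun t => B t - Z t) atBot atTop)
    (hCYtop : Tendsto (fun t => C t - Y t) atTop atBot)
    (hCYbot : Tendsto (fun t => C t - Y t) atBot atTop)
    (hY : Y = Df Z B) (hC : C = Rf Z B)
    (hZ : Z = Db Y C) (hB : B = Rb Y C) :
    ∀ t : ℝ, Qf Z B t = Qb Y C t := by
  have hXc : Continuous (fun t => B t - Z t) := hBc.sub hZc
  have hWc : Continuous (fun t => C t - Y t) := hCc.sub hYc
  -- The key algebraic identity: the difference is constant.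
  have key : ∀ u, Qf Z B u - Qf Z B 0 = Qb Y C u - Qb Y C 0 := by
    intro u
    have h1 := congrFun hY u
    have h2 := congrFun hZ u
    simp only [Df, Db] at h1 h2
    linarith
  -- Nonnegativity of Qf.
  have hQfnn : ∀ u, 0 ≤ Qf Z B u := by
    intro u
    obtain ⟨m, hm, hmax⟩ := exists_max_ge _ hXc hBZtop u
    apply le_csSup
    · refine ⟨(B m - Z m) - (B u - Z u), ?_⟩
      rintro y ⟨s, hs, rfl⟩
      have := hmax s hs
      dsimp; linarith
    · exact ⟨u, self_mem_Ici, by ring⟩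
  -- Nonnegativity of Qb.
  have hQbnn : ∀ u, 0 ≤ Qb Y C u := by
    intro u
    obtain ⟨m, hm, hmin⟩ := exists_min_le _ hWc hCYbot u
    apply le_csSup
    · refine ⟨(C u - Y u) - (C m - Y m), ?_⟩
      rintro y ⟨s, hs, rfl⟩
      have := hmin s hs
      dsimp; linarith
    · exact ⟨u, self_mem_Iic, by ring⟩
  -- Qf attains 0.
  obtain ⟨t1, ht1, hmax1⟩ := exists_max_ge _ hXc hBZtop 0
  have hQf0 : Qf Z B t1 = 0 := by
    apply le_antisymm
    · apply Real.sSup_le _ le_rfl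
      rintro y ⟨s, hs, rfl⟩
      have := hmax1 s (le_trans ht1 hs)
      have h2 := hmax1 t1 ht1
      dsimp; linarith
    · exact hQfnn t1
  -- Qb attains 0.
  obtain ⟨t2, ht2, hmin2⟩ := exists_min_le _ hWc hCYbot 0
  have hQb0 : Qb Y C t2 = 0 := by
    apply le_antisymm
    · apply Real.sSup_le _ le_rfl
      rintro y ⟨s, hs, rfl⟩
      have := hmin2 s (le_trans hs ht2)
      have h2 := hmin2 t2 ht2
      dsimp; linarith
    · exact hQbnn t2
  -- Combine: constant difference is both ≤ 0 and ≥ 0.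
  have c1 := key t1
  have c2 := key t2
  have hb1 := hQbnn t1
  have hf2 := hQfnn t2
  intro t
  have := key t
  linarith
end

section
/- Let X = (X_m)_{m∈ℤ} be a family of continuous functions ℝ → ℝ. For (m,s) ≤ (n,t) define the last-passage value L_{(m,s),(n,t)}(X) = sup { Σ_{r=m}^n X_r(s_{r-1}, s_r) : s = s_{m-1} ≤ s_m ≤ ⋯ ≤ s_n = t }, where X_r(a,b) := X_r(b) - X_r(a). Then for 0 < s < t < T < u and m ≤ n: X_m(s,t) ≤ L_{(m,s),(n,u)}(X) - L_{(m,t),(n,u)}(X) ≤ L_{(m,s),(n,T)}(X) - L_{(m,t),(n,T)}(X). -/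
open Filter Set

/-- A sequence `σ : ℤ → ℝ` encodes an up-right path from `(m,s)` to `(n,t)` via its
jump times: `σ (m-1) = s`, `σ n = t`, and `σ` is nondecreasing on `[m-1, n]`. -/
def IsPath (m n : ℤ) (s t : ℝ) (σ : ℤ → ℝ) : Prop :=
  σ (m - 1) = s ∧ σ n = t ∧ ∀ r : ℤ, m - 1 ≤ r → r < n → σ r ≤ σ (r + 1)

/-- The energy collected by the path `σ` in the environment `X`:
`Σ_{r=m}^n (X_r(σ_r) - X_r(σ_{r-1}))`. -/
noncomputable def energy (X : ℤ → ℝ → ℝ) (m n : ℤ) (σ : ℤ → ℝ) : ℝ :=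
  ∑ r ∈ Finset.Icc m n, (X r (σ r) - X r (σ (r - 1)))

/-- The semi-discrete last-passage value `L_{(m,s),(n,t)}(X)`. -/
noncomputable def LPP (X : ℤ → ℝ → ℝ) (m : ℤ) (s : ℝ) (n : ℤ) (t : ℝ) : ℝ :=
  sSup (energy X m n '' {σ | IsPath m n s t σ})

/-!
Moving the starting point of a path from `(m,t)` back to `(m,s)` adds exactly `X_m(s,t)` to its
energy, which gives the first inequality. For the second, a path `σ` from `(m,s)` to `(n,u)` and a
path `τ` from `(m,t)` to `(n,T)` start with `σ` below `τ` and end with `τ` below `σ`, so they cross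
at some level `k`; exchanging their tails from level `k` on yields paths `(m,s) → (n,T)` and
`(m,t) → (n,u)` with the same total energy, i.e. `L` is submodular. Continuity of the environment
only serves to make all suprema finite.
-/

lemma exists_crossing_index {β : Type*} [LinearOrder β] {f g : ℤ → β} {a b : ℤ} (hab : a ≤ b)
    (ha : f a < g a) (hb : g b ≤ f b) :
    ∃ k, a < k ∧ k ≤ b ∧ f (k - 1) ≤ g (k - 1) ∧ g k ≤ f k := by
  induction b, hab using Int.leInduction with
  | base => exact absurd hb (not_le.2 ha)
  | succ b _ ih =>
    by_cases hcross : g b ≤ f b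
    · obtain ⟨k, hak, hkb, hlow, hhigh⟩ := ih hcross
      exact ⟨k, hak, by omega, hlow, hhigh⟩
    · exact ⟨b + 1, by omega, le_rfl, by simpa using (not_le.1 hcross).le, hb⟩

def splice {α : Type*} (k : ℤ) (σ τ : ℤ → α) (r : ℤ) : α :=
  if r < k then σ r else τ r

section Paths

variable {m n : ℤ} {s t u : ℝ} {σ : ℤ → ℝ}

lemma exists_isPath (hmn : m ≤ n) (hst : s ≤ t) : ∃ σ, IsPath m n s t σ := by
  refine ⟨fun r => if r < n then s else t, if_pos (by omega), if_neg (by omega), ?_⟩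
  intro r _ hrn
  simp only [if_pos hrn]
  split_ifs
  exacts [le_rfl, hst]

namespace IsPath

lemma monotoneOn (hσ : IsPath m n s t σ) : MonotoneOn σ (Icc (m - 1) n) :=
  monotoneOn_of_le_add_one ordConnected_Icc fun r _ hr hr' => hσ.2.2 r hr.1 hr'.2

lemma mem_Icc (hσ : IsPath m n s t σ) {r : ℤ} (hr : r ∈ Icc (m - 1) n) : σ r ∈ Icc s t := by
  have hmn : m - 1 ≤ n := hr.1.trans hr.2
  constructor
  · rw [← hσ.1]; exact hσ.monotoneOn ⟨le_rfl, hmn⟩ hr hr.1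
  · rw [← hσ.2.1]; exact hσ.monotoneOn hr ⟨hmn, le_rfl⟩ hr.2

lemma update_start (hσ : IsPath m n t u σ) (hmn : m ≤ n) (hst : s ≤ t) :
    IsPath m n s u (Function.update σ (m - 1) s) := by
  refine ⟨Function.update_self _ _ _, ?_, fun r hr hrn => ?_⟩
  · rw [Function.update_of_ne (by omega)]; exact hσ.2.1
  · rw [Function.update_of_ne (show r + 1 ≠ m - 1 by omega)]
    rcases hr.eq_or_lt with rfl | hr
    · rw [Function.update_self]
      exact hst.trans (hσ.1 ▸ hσ.2.2 _ le_rfl hrn)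
    · rw [Function.update_of_ne hr.ne']
      exact hσ.2.2 r hr.le hrn

lemma splice {s' t' : ℝ} {τ : ℤ → ℝ} (hσ : IsPath m n s t σ) (hτ : IsPath m n s' t' τ) {k : ℤ}
    (hmk : m ≤ k) (hkn : k ≤ n) (hjoin : σ (k - 1) ≤ τ k) : IsPath m n s t' (splice k σ τ) := by
  refine ⟨?_, ?_, fun r hr hrn => ?_⟩
  · rw [_root_.splice, if_pos (by omega)]; exact hσ.1
  · rw [_root_.splice, if_neg (by omega)]; exact hτ.2.1
  · unfold _root_.splice
    split_ifs with hrk hrk'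
    · exact hσ.2.2 r hr hrn
    · rw [show r = k - 1 by omega, sub_add_cancel]; exact hjoin
    · omega
    · exact hτ.2.2 r hr hrn

end IsPath

end Paths

section Energy

variable {X : ℤ → ℝ → ℝ} {m n : ℤ}

lemma energy_update_start (hmn : m ≤ n) (σ : ℤ → ℝ) (s : ℝ) :
    energy X m n (Function.update σ (m - 1) s) = energy X m n σ + (X m (σ (m - 1)) - X m s) := by
  have hm : m ∈ Finset.Icc m n := Finset.mem_Icc.2 ⟨le_rfl, hmn⟩
  have htail : ∀ r ∈ (Finset.Icc m n).erase m,
      X r (Function.update σ (m - 1) s r) - X r (Function.update σ (m - 1) s (r - 1)) =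
        X r (σ r) - X r (σ (r - 1)) := by
    intro r hr
    obtain ⟨hrm, hr⟩ := Finset.mem_erase.1 hr
    have := (Finset.mem_Icc.1 hr).1
    rw [Function.update_of_ne (by omega), Function.update_of_ne (by omega)]
  rw [energy, energy, ← Finset.add_sum_erase _ _ hm, ← Finset.add_sum_erase _ _ hm,
    Finset.sum_congr rfl htail, Function.update_of_ne (by omega), Function.update_self]
  ring

lemma energy_splice_add_energy_splice (k : ℤ) (σ τ : ℤ → ℝ) :
    energy X m n (splice k σ τ) + energy X m n (splice k τ σ) = energy X m n σ + energy X m n τ := by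
  simp only [energy, splice, ← Finset.sum_add_distrib]
  refine Finset.sum_congr rfl fun r _ => ?_
  split_ifs <;> ring

end Energy

section LastPassage

variable {X : ℤ → ℝ → ℝ} {m n : ℤ} {s t u : ℝ}

lemma bddAbove_energy_image (hX : ∀ r, Continuous (X r)) (m n : ℤ) (s t : ℝ) :
    BddAbove (energy X m n '' {σ | IsPath m n s t σ}) := by
  choose C hC using fun r => (isCompact_Icc (a := s) (b := t)).exists_bound_of_continuousOn
    (hX r).continuousOn
  refine ⟨∑ r ∈ Finset.Icc m n, 2 * C r, forall_mem_image.2 fun σ hσ => ?_⟩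
  refine Finset.sum_le_sum fun r hr => ?_
  obtain ⟨hmr, hrn⟩ := Finset.mem_Icc.1 hr
  have h₁ := hC r _ (hσ.mem_Icc ⟨by omega, hrn⟩)
  have h₂ := hC r _ (hσ.mem_Icc (r := r - 1) ⟨by omega, by omega⟩)
  rw [Real.norm_eq_abs] at h₁ h₂
  linarith [le_abs_self (X r (σ r)), neg_abs_le (X r (σ (r - 1)))]

lemma energy_le_lpp (hX : ∀ r, Continuous (X r)) {σ : ℤ → ℝ} (hσ : IsPath m n s t σ) :
    energy X m n σ ≤ LPP X m s n t :=
  le_csSup (bddAbove_energy_image hX m n s t) (mem_image_of_mem _ hσ)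

lemma lpp_le_of_forall_energy_le (hmn : m ≤ n) (hst : s ≤ t) {c : ℝ}
    (h : ∀ σ, IsPath m n s t σ → energy X m n σ ≤ c) : LPP X m s n t ≤ c := by
  obtain ⟨σ, hσ⟩ := exists_isPath hmn hst
  exact csSup_le ⟨_, mem_image_of_mem _ hσ⟩ (forall_mem_image.2 h)

lemma lpp_add_sub_le_lpp (hX : ∀ r, Continuous (X r)) (hmn : m ≤ n) (hst : s ≤ t)
    (htu : t ≤ u) : LPP X m t n u + (X m t - X m s) ≤ LPP X m s n u := by
  rw [← le_sub_iff_add_le]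
  refine lpp_le_of_forall_energy_le hmn htu fun σ hσ => ?_
  rw [le_sub_iff_add_le]
  calc energy X m n σ + (X m t - X m s) = energy X m n (Function.update σ (m - 1) s) := by
        rw [energy_update_start hmn, hσ.1]
    _ ≤ LPP X m s n u := energy_le_lpp hX (hσ.update_start hmn hst)

lemma lpp_add_lpp_le_lpp_add_lpp (hX : ∀ r, Continuous (X r)) (hmn : m ≤ n) {T : ℝ}
    (hst : s < t) (htT : t ≤ T) (hTu : T ≤ u) :
    LPP X m s n u + LPP X m t n T ≤ LPP X m s n T + LPP X m t n u := by
  rw [← le_sub_iff_add_le]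
  refine lpp_le_of_forall_energy_le hmn (by linarith) fun σ hσ => ?_
  rw [le_sub_comm]
  refine lpp_le_of_forall_energy_le hmn htT fun τ hτ => ?_
  rw [le_sub_iff_add_le']
  obtain ⟨k, hmk, hkn, hlow, hhigh⟩ := exists_crossing_index (f := σ) (g := τ)
    (by omega : m - 1 ≤ n) (by rw [hσ.1, hτ.1]; exact hst) (by rw [hσ.2.1, hτ.2.1]; exact hTu)
  have hτstep : τ (k - 1) ≤ τ k := hτ.monotoneOn ⟨by omega, by omega⟩ ⟨by omega, hkn⟩ (by omega)
  calc energy X m n σ + energy X m n τ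
      = energy X m n (splice k σ τ) + energy X m n (splice k τ σ) :=
        (energy_splice_add_energy_splice k σ τ).symm
    _ ≤ LPP X m s n T + LPP X m t n u :=
        add_le_add (energy_le_lpp hX (hσ.splice hτ (by omega) hkn (hlow.trans hτstep)))
          (energy_le_lpp hX (hτ.splice hσ (by omega) hkn (hτstep.trans hhigh)))

end LastPassage

theorem lpp_horizontal_increment_comparison_general
    (X : ℤ → ℝ → ℝ) (hX : ∀ r, Continuous (X r))
    (m n : ℤ) (s t T u : ℝ)
    (hst : s < t) (htT : t < T) (hTu : T < u) (hmn : m ≤ n) :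
    X m t - X m s ≤ LPP X m s n u - LPP X m t n u ∧
      LPP X m s n u - LPP X m t n u ≤ LPP X m s n T - LPP X m t n T := by
  have hshift := lpp_add_sub_le_lpp hX hmn hst.le (htT.trans hTu).le
  have hsubmod := lpp_add_lpp_le_lpp_add_lpp hX hmn hst htT.le hTu.le
  constructor <;> linarith

/-- Lemma A.4, first statement: comparison of horizontal increments of last-passage
values in a continuous environment. For `0 < s < t < T < u` and `m ≤ n`,
`X_m(s,t) ≤ L_{(m,s),(n,u)} - L_{(m,t),(n,u)} ≤ L_{(m,s),(n,T)} - L_{(m,t),(n,T)}`. -/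
theorem lpp_horizontal_increment_comparison
    (X : ℤ → ℝ → ℝ) (hX : ∀ r, Continuous (X r))
    (m n : ℤ) (s t T u : ℝ)
    (hs : 0 < s) (hst : s < t) (htT : t < T) (hTu : T < u) (hmn : m ≤ n) :
    X m t - X m s ≤ LPP X m s n u - LPP X m t n u ∧
      LPP X m s n u - LPP X m t n u ≤ LPP X m s n T - LPP X m t n T :=
  lpp_horizontal_increment_comparison_general X hX m n s t T u hst htT hTu hmn
end
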